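/- Let d ≥ 1, let D be a bounded Lipschitz domain in ℝ^d, let T > 0 and c₂ ≥ 1. Then there exist constants C₁, C₂ > 0 (depending only on d, T, c₂ and D) such that for every t ∈ (0, T] and every x ∈ D̄, ∫_{∂D} t^{−d/2} exp(−|y − x|² / (c₂ t)) dH^{d−1}(y) ≤ C₁/√t + C₂, where the integral is with respect to the (d−1)-dimensional Hausdorff measure restricted to ∂D. -/

import Mathlib

/-!
Near each of its points the boundary of `D` is a rotated Lipschitz graph over `ℝ^(d-1)`, so
the Lipschitz parametrisation bounds `H^(d-1)(∂D ∩ B(x, r))` by `A r^(d-1)`; compactness of `∂D`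
makes `A` uniform. With `ρ = √(c₂ t)`, the Gaussian `exp (-|y - x|² / ρ²)` is dominated by
`∑ₖ e⁻ᵏ 1_{B(x, (k+1)ρ)}`, hence its surface integral by `A ρ^(d-1) ∑ₖ (k+1)^(d-1) e⁻ᵏ`,
and the factor `t^(-d/2)` turns `ρ^(d-1)` into a multiple of `1/√t`.
-/

open MeasureTheory Metric Set Filter

noncomputable section

/-- A bounded Lipschitz domain in `ℝ^d`: a nonempty bounded open set such that near every
boundary point, after an orthogonal change of coordinates, the boundary is the graph of a
Lipschitz function and the domain lies on one side of this graph. -/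
def IsBoundedLipschitzDomain (d : ℕ) (D : Set (EuclideanSpace ℝ (Fin d))) : Prop :=
  D.Nonempty ∧ IsOpen D ∧ Bornology.IsBounded D ∧
    ∀ x ∈ frontier D,
      ∃ (e : EuclideanSpace ℝ (Fin d) ≃ₗᵢ[ℝ] EuclideanSpace ℝ (Fin d)) (i₀ : Fin d)
        (f : (Fin d → ℝ) → ℝ) (K : NNReal) (U : Set (EuclideanSpace ℝ (Fin d))),
        LipschitzWith K f ∧ IsOpen U ∧ x ∈ U ∧
        D ∩ U = {y ∈ U | f (Function.update (fun i => e y i) i₀ 0) < e y i₀} ∧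
        frontier D ∩ U = {y ∈ U | f (Function.update (fun i => e y i) i₀ 0) = e y i₀}

open scoped ENNReal NNReal Topology

def IsUpperAhlforsRegular {X : Type*} [PseudoMetricSpace X] [MeasurableSpace X]
    (μ : Measure X) (s : Set X) (n : ℕ) : Prop :=
  ∃ A : ℝ≥0, ∀ (x : X) (r : ℝ), μ (s ∩ closedBall x r) ≤ A * ENNReal.ofReal r ^ n

namespace IsUpperAhlforsRegular

variable {X : Type*} [PseudoMetricSpace X] [MeasurableSpace X] {μ : Measure X} {s t : Set X}
  {n : ℕ}

theorem mono (h : IsUpperAhlforsRegular μ t n) (hst : s ⊆ t) : IsUpperAhlforsRegular μ s n :=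
  let ⟨A, hA⟩ := h
  ⟨A, fun x r => (measure_mono (inter_subset_inter_left _ hst)).trans (hA x r)⟩

theorem empty : IsUpperAhlforsRegular μ ∅ n := ⟨0, by simp⟩

theorem union (hs : IsUpperAhlforsRegular μ s n) (ht : IsUpperAhlforsRegular μ t n) :
    IsUpperAhlforsRegular μ (s ∪ t) n := by
  obtain ⟨A, hA⟩ := hs
  obtain ⟨B, hB⟩ := ht
  refine ⟨A + B, fun x r => ?_⟩
  calc μ ((s ∪ t) ∩ closedBall x r)
      ≤ μ (s ∩ closedBall x r) + μ (t ∩ closedBall x r) := by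
        rw [union_inter_distrib_right]; exact measure_union_le _ _
    _ ≤ A * ENNReal.ofReal r ^ n + B * ENNReal.ofReal r ^ n := add_le_add (hA x r) (hB x r)
    _ = ↑(A + B) * ENNReal.ofReal r ^ n := by push_cast; ring

theorem biUnion_finset {ι : Type*} {u : Finset ι} {s : ι → Set X}
    (h : ∀ i ∈ u, IsUpperAhlforsRegular μ (s i) n) :
    IsUpperAhlforsRegular μ (⋃ i ∈ u, s i) n := by
  classical
  induction u using Finset.induction_on with
  | empty => simpa using empty
  | insert i u _ ih =>
    rw [Finset.set_biUnion_insert]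
    exact (h i (u.mem_insert_self i)).union (ih fun j hj => h j (Finset.mem_insert_of_mem hj))

end IsUpperAhlforsRegular

theorem IsCompact.isUpperAhlforsRegular {X : Type*} [PseudoMetricSpace X] [MeasurableSpace X]
    {μ : Measure X} {s : Set X} {n : ℕ} (hs : IsCompact s)
    (h : ∀ z ∈ s, ∃ U ∈ 𝓝 z, IsUpperAhlforsRegular μ (s ∩ U) n) :
    IsUpperAhlforsRegular μ s n := by
  choose U hU hreg using h
  obtain ⟨t, hst⟩ := hs.elim_nhds_subcover' U hU
  refine (IsUpperAhlforsRegular.biUnion_finset (u := t) fun z _ => hreg z z.2).mono fun y hy => ?_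
  simpa [hy] using hst hy

section GaussianShells

open Real

def expShellSum (n : ℕ) : ℝ := ∑' k : ℕ, ((k : ℝ) + 1) ^ n * exp (-k)

theorem summable_add_one_pow_mul_exp_neg (n : ℕ) :
    Summable fun k : ℕ => ((k : ℝ) + 1) ^ n * exp (-k) := by
  have h := ((summable_nat_add_iff 1).2 (summable_pow_mul_exp_neg_nat_mul n one_pos)).mul_left
    (exp 1)
  refine h.congr fun k => ?_
  rw [mul_left_comm, ← exp_add]
  push_cast
  ring_nf

theorem expShellSum_nonneg (n : ℕ) : 0 ≤ expShellSum n :=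
  tsum_nonneg fun _ => by positivity

theorem exp_neg_sq_le_exp_neg_floor {u : ℝ} (hu : 0 ≤ u) : exp (-u ^ 2) ≤ exp (-⌊u⌋₊) := by
  have hk : (⌊u⌋₊ : ℝ) ≤ u := Nat.floor_le hu
  have hk' : (⌊u⌋₊ : ℝ) ≤ (⌊u⌋₊ : ℝ) ^ 2 := by
    rcases Nat.eq_zero_or_pos ⌊u⌋₊ with h | h
    · simp [h]
    · nlinarith [(Nat.one_le_cast (α := ℝ)).2 h]
  gcongr
  nlinarith

variable {X : Type*} [PseudoMetricSpace X]

theorem ofReal_exp_neg_dist_sq_le_tsum_indicator (x y : X) {ρ : ℝ} (hρ : 0 < ρ) :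
    ENNReal.ofReal (exp (-(dist y x ^ 2) / ρ ^ 2))
      ≤ ∑' k : ℕ, (closedBall x ((k + 1) * ρ)).indicator
          (fun _ => ENNReal.ofReal (exp (-k))) y := by
  set k := ⌊dist y x / ρ⌋₊
  have hy : y ∈ closedBall x ((k + 1) * ρ) := by
    rw [mem_closedBall, ← div_le_iff₀ hρ]
    exact (Nat.lt_floor_add_one _).le
  calc ENNReal.ofReal (exp (-(dist y x ^ 2) / ρ ^ 2))
      ≤ ENNReal.ofReal (exp (-k)) := by
        rw [neg_div, ← div_pow]
        exact ENNReal.ofReal_le_ofReal (exp_neg_sq_le_exp_neg_floor (by positivity))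
    _ = (closedBall x ((k + 1) * ρ)).indicator (fun _ => ENNReal.ofReal (exp (-k))) y := by
        rw [indicator_of_mem hy]
    _ ≤ _ := ENNReal.le_tsum k

variable [MeasurableSpace X] [OpensMeasurableSpace X] {μ : Measure X} {s : Set X} {n : ℕ}
  {A : ℝ≥0}

theorem lintegral_exp_neg_dist_sq_le
    (hA : ∀ (x : X) (r : ℝ), μ (s ∩ closedBall x r) ≤ A * ENNReal.ofReal r ^ n)
    (x : X) {ρ : ℝ} (hρ : 0 < ρ) :
    ∫⁻ y in s, ENNReal.ofReal (exp (-(dist y x ^ 2) / ρ ^ 2)) ∂μ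
      ≤ ENNReal.ofReal (A * ρ ^ n * expShellSum n) := by
  have hball : ∀ k : ℕ, MeasurableSet (closedBall x ((k + 1) * ρ)) :=
    fun _ => measurableSet_closedBall
  calc ∫⁻ y in s, ENNReal.ofReal (exp (-(dist y x ^ 2) / ρ ^ 2)) ∂μ
      ≤ ∫⁻ y in s, ∑' k : ℕ, (closedBall x ((k + 1) * ρ)).indicator
          (fun _ => ENNReal.ofReal (exp (-k))) y ∂μ :=
        lintegral_mono fun y => ofReal_exp_neg_dist_sq_le_tsum_indicator x y hρ
    _ = ∑' k : ℕ, ENNReal.ofReal (exp (-k)) * μ (s ∩ closedBall x ((k + 1) * ρ)) := by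
        rw [lintegral_tsum fun k => (measurable_const.indicator (hball k)).aemeasurable]
        refine tsum_congr fun k => ?_
        rw [lintegral_indicator_const (hball k), Measure.restrict_apply (hball k), inter_comm]
    _ ≤ ∑' k : ℕ, ENNReal.ofReal (exp (-k)) * (A * ENNReal.ofReal ((k + 1) * ρ) ^ n) :=
        ENNReal.tsum_le_tsum fun k => by gcongr; exact hA x _
    _ = ∑' k : ℕ, ENNReal.ofReal (A * ρ ^ n * (((k : ℝ) + 1) ^ n * exp (-k))) := by
        refine tsum_congr fun k => ?_
        have hk : (0 : ℝ) ≤ k + 1 := by positivity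
        rw [ENNReal.ofReal_mul hk, ENNReal.ofReal_mul (by positivity),
          ENNReal.ofReal_mul (by positivity), ENNReal.ofReal_mul (by positivity),
          ENNReal.ofReal_pow hρ.le, ENNReal.ofReal_pow hk, ENNReal.ofReal_coe_nnreal]
        ring
    _ = ENNReal.ofReal (A * ρ ^ n * expShellSum n) := by
        rw [← ENNReal.ofReal_tsum_of_nonneg (fun _ => by positivity)
          ((summable_add_one_pow_mul_exp_neg n).mul_left _), tsum_mul_left, expShellSum]

theorem IsUpperAhlforsRegular.exists_integral_exp_neg_dist_sq_le
    (h : IsUpperAhlforsRegular μ s n) :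
    ∃ C : ℝ, 0 ≤ C ∧ ∀ (x : X) (ρ : ℝ), 0 < ρ →
      ∫ y in s, exp (-(dist y x ^ 2) / ρ ^ 2) ∂μ ≤ C * ρ ^ n := by
  obtain ⟨A, hA⟩ := h
  refine ⟨A * expShellSum n, by positivity [expShellSum_nonneg n], fun x ρ hρ => ?_⟩
  rw [integral_eq_lintegral_of_nonneg_ae (ae_of_all _ fun _ => (exp_pos _).le)
    (by fun_prop : Continuous fun y => exp (-(dist y x ^ 2) / ρ ^ 2)).aestronglyMeasurable]
  refine ENNReal.toReal_le_of_le_ofReal (by positivity [expShellSum_nonneg n]) ?_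
  calc _ ≤ ENNReal.ofReal (A * ρ ^ n * expShellSum n) := lintegral_exp_neg_dist_sq_le hA x hρ
    _ = ENNReal.ofReal (A * expShellSum n * ρ ^ n) := by ring_nf

end GaussianShells

section LipschitzGraph

theorem Fin.dist_removeNth_le {m : ℕ} {α : Fin (m + 1) → Type*} [∀ i, PseudoMetricSpace (α i)]
    (i₀ : Fin (m + 1)) (x y : ∀ i, α i) : dist (i₀.removeNth x) (i₀.removeNth y) ≤ dist x y := by
  conv_rhs => rw [← i₀.insertNth_self_removeNth x, ← i₀.insertNth_self_removeNth y]
  rw [Fin.dist_insertNth_insertNth]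
  exact le_max_right _ _

variable {m : ℕ} (e : EuclideanSpace ℝ (Fin (m + 1)) ≃ₗᵢ[ℝ] EuclideanSpace ℝ (Fin (m + 1)))
  (i₀ : Fin (m + 1)) (f : (Fin (m + 1) → ℝ) → ℝ)

/-- The point of the graph `{y | e y i₀ = f (e y with i₀-th coordinate 0)}` lying over `v`. -/
def lipschitzGraphParam (v : Fin m → ℝ) : EuclideanSpace ℝ (Fin (m + 1)) :=
  e.symm (WithLp.toLp 2 (i₀.insertNth (f (i₀.insertNth 0 v)) v))

theorem lipschitzWith_insertNth_graph {K : ℝ≥0} (hf : LipschitzWith K f) :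
    LipschitzWith (K + 1) fun v : Fin m → ℝ =>
      (i₀.insertNth (f (i₀.insertNth 0 v)) v : Fin (m + 1) → ℝ) := by
  refine LipschitzWith.of_dist_le_mul fun v w => ?_
  have hfvw : dist (f (i₀.insertNth 0 v)) (f (i₀.insertNth 0 w)) ≤ K * dist v w := by
    simpa using hf.dist_le_mul (i₀.insertNth 0 v) (i₀.insertNth (0 : ℝ) w)
  rw [Fin.dist_insertNth_insertNth, NNReal.coe_add, NNReal.coe_one, add_mul, one_mul]
  exact max_le (hfvw.trans (le_add_of_nonneg_right dist_nonneg))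
    (le_add_of_nonneg_left (by positivity))

theorem exists_lipschitzWith_lipschitzGraphParam {K : ℝ≥0} (hf : LipschitzWith K f) :
    ∃ L, LipschitzWith L (lipschitzGraphParam e i₀ f) :=
  ⟨_, e.symm.lipschitz.comp ((PiLp.lipschitzWith_toLp 2 _).comp
    (lipschitzWith_insertNth_graph i₀ f hf))⟩

theorem lipschitzGraphParam_removeNth {y : EuclideanSpace ℝ (Fin (m + 1))}
    (hy : f (Function.update (fun i => e y i) i₀ 0) = e y i₀) :
    lipschitzGraphParam e i₀ f (i₀.removeNth (e y)) = y := by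
  rw [lipschitzGraphParam, Fin.insertNth_removeNth, Fin.insertNth_removeNth, hy,
    Function.update_eq_self, WithLp.toLp_ofLp, LinearIsometryEquiv.symm_apply_apply]

theorem isUpperAhlforsRegular_lipschitzGraph {K : ℝ≥0} (hf : LipschitzWith K f) :
    IsUpperAhlforsRegular μH[m] {y | f (Function.update (fun i => e y i) i₀ 0) = e y i₀} m := by
  set G := {y | f (Function.update (fun i => e y i) i₀ 0) = e y i₀}
  set π : EuclideanSpace ℝ (Fin (m + 1)) → Fin m → ℝ := fun y => i₀.removeNth (e y)
  have hπ : LipschitzWith 1 π := LipschitzWith.of_dist_le_mul fun y z => by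
    simpa [π] using (i₀.dist_removeNth_le (e y).ofLp (e z).ofLp).trans
      ((PiLp.lipschitzWith_ofLp 2 _).dist_le_mul _ _)
  obtain ⟨L, hL⟩ := exists_lipschitzWith_lipschitzGraphParam e i₀ f hf
  refine ⟨(L * 2) ^ m, fun c r => ?_⟩
  rcases lt_or_ge r 0 with hr | hr
  · simp [closedBall_eq_empty.2 hr]
  have hG : G ∩ closedBall c r ⊆ lipschitzGraphParam e i₀ f '' closedBall (π c) r :=
    fun y hy => ⟨π y, by simpa using hπ.mapsTo_closedBall c r hy.2,
      lipschitzGraphParam_removeNth e i₀ f hy.1⟩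
  calc μH[m] (G ∩ closedBall c r)
      ≤ μH[m] (lipschitzGraphParam e i₀ f '' closedBall (π c) r) := measure_mono hG
    _ ≤ (L : ℝ≥0∞) ^ (m : ℝ) * μH[m] (closedBall (π c) r) :=
        hL.hausdorffMeasure_image_le (Nat.cast_nonneg m) _
    _ = ↑((L * 2) ^ m) * ENNReal.ofReal r ^ m := by
        have := hausdorffMeasure_pi_real (ι := Fin m)
        rw [Fintype.card_fin] at this
        rw [this, Real.volume_pi_closedBall _ hr, Fintype.card_fin, ENNReal.rpow_natCast,
          ENNReal.ofReal_pow (by positivity), ENNReal.ofReal_mul zero_le_two,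
          ENNReal.ofReal_ofNat]
        push_cast
        ring

end LipschitzGraph

theorem IsBoundedLipschitzDomain.isUpperAhlforsRegular_frontier {m : ℕ}
    {D : Set (EuclideanSpace ℝ (Fin (m + 1)))} (hD : IsBoundedLipschitzDomain (m + 1) D) :
    IsUpperAhlforsRegular μH[m] (frontier D) m := by
  obtain ⟨-, -, hbdd, hchart⟩ := hD
  refine (isCompact_of_isClosed_isBounded isClosed_frontier
    (hbdd.closure.subset frontier_subset_closure)).isUpperAhlforsRegular fun z hz => ?_
  obtain ⟨e, i₀, f, K, U, hf, hU, hzU, -, hfr⟩ := hchart z hz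
  refine ⟨U, hU.mem_nhds hzU, (isUpperAhlforsRegular_lipschitzGraph e i₀ f hf).mono ?_⟩
  rw [hfr]
  exact fun y hy => hy.2

theorem Real.rpow_neg_succ_div_two_mul_sqrt_pow {t : ℝ} (ht : 0 < t) (m : ℕ) :
    t ^ (-((m + 1 : ℕ) : ℝ) / 2) * √t ^ m = (√t)⁻¹ := by
  rw [Real.sqrt_eq_rpow, ← Real.rpow_natCast, ← Real.rpow_mul ht.le, ← Real.rpow_add ht,
    ← Real.rpow_neg ht.le]
  congr 1
  push_cast
  ring

theorem gaussian_surface_integral_estimate_general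
    (d : ℕ) (hd : 1 ≤ d) (D : Set (EuclideanSpace ℝ (Fin d)))
    (hD : IsBoundedLipschitzDomain d D) (T : ℝ) (c₂ : ℝ) (hc₂ : 1 ≤ c₂) :
    ∃ C₁ : ℝ, 0 < C₁ ∧ ∃ C₂ : ℝ, 0 < C₂ ∧
      ∀ t : ℝ, 0 < t → t ≤ T → ∀ x ∈ closure D,
        (∫ y in frontier D,
            t ^ (-(d : ℝ) / 2) * Real.exp (-(dist y x ^ 2) / (c₂ * t)) ∂(μH[(d : ℝ) - 1]))
          ≤ C₁ / Real.sqrt t + C₂ := by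
  obtain ⟨m, rfl⟩ := Nat.exists_eq_add_of_le' hd
  obtain ⟨C, hC, hgauss⟩ :=
    hD.isUpperAhlforsRegular_frontier.exists_integral_exp_neg_dist_sq_le
  have hc₂0 : 0 < c₂ := by linarith
  refine ⟨(C + 1) * √c₂ ^ m, by positivity, 1, one_pos, fun t ht _ x _ => ?_⟩
  have hdim : ((m + 1 : ℕ) : ℝ) - 1 = m := by push_cast; ring
  rw [hdim, integral_const_mul, ← Real.sq_sqrt (mul_pos hc₂0 ht).le]
  calc t ^ (-((m + 1 : ℕ) : ℝ) / 2)
        * ∫ y in frontier D, Real.exp (-(dist y x ^ 2) / √(c₂ * t) ^ 2) ∂μH[m]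
      ≤ t ^ (-((m + 1 : ℕ) : ℝ) / 2) * (C * √(c₂ * t) ^ m) := by
        gcongr
        exact hgauss x _ (by positivity)
    _ = C * √c₂ ^ m * (t ^ (-((m + 1 : ℕ) : ℝ) / 2) * √t ^ m) := by
        rw [Real.sqrt_mul hc₂0.le, mul_pow]
        ring
    _ ≤ (C + 1) * √c₂ ^ m / √t + 1 := by
        rw [Real.rpow_neg_succ_div_two_mul_sqrt_pow ht, ← div_eq_mul_inv]
        exact le_add_of_le_of_nonneg (by gcongr; linarith) zero_le_one

/-- surface-integral estimate (2.6) for the Gaussian upper bound. -/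
theorem gaussian_surface_integral_estimate
    (d : ℕ) (hd : 1 ≤ d) (D : Set (EuclideanSpace ℝ (Fin d)))
    (hD : IsBoundedLipschitzDomain d D) (T : ℝ) (hT : 0 < T) (c₂ : ℝ) (hc₂ : 1 ≤ c₂) :
    ∃ C₁ : ℝ, 0 < C₁ ∧ ∃ C₂ : ℝ, 0 < C₂ ∧
      ∀ t : ℝ, 0 < t → t ≤ T → ∀ x ∈ closure D,
        (∫ y in frontier D,
            t ^ (-(d : ℝ) / 2) * Real.exp (-(dist y x ^ 2) / (c₂ * t)) ∂(μH[(d : ℝ) - 1]))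
          ≤ C₁ / Real.sqrt t + C₂ :=
  gaussian_surface_integral_estimate_general d hd D hD T c₂ hc₂
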